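/- Let D be an n×n distance matrix with compaction vector a, and suppose its compaction matrix D(a) = D - Σ_i a_i E_i has the following block structure for some positive integers n_1, n_2 with n_1 + n_2 = n and some δ > 0: the (i,j) entry equals 0 if i,j both lie in {1,…,n_1} or both lie in {n_1+1,…,n}, and equals δ otherwise. Then D(i,j) = a_i + a_j whenever i ≠ j lie in the same block, and D(i,j) = δ + a_i + a_j whenever they lie in different blocks; consequently D is realized by a tree with two internal nodes v_1, v_2 joined by an edge of weight δ, with leaves 1,…,n_1 attached to v_1 by edges of weights a_1,…,a_{n_1}, and leaves n_1+1,…,n attached to v_2 by edges of weights a_{n_1+1},…,a_n. -/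

import Mathlib

noncomputable def walkWeight {V : Type*} {G : SimpleGraph V} (w : V → V → ℝ) {u v : V}
    (p : G.Walk u v) : ℝ := (p.darts.map (fun d => w d.fst d.snd)).sum

noncomputable def gdist {V : Type*} (G : SimpleGraph V) (w : V → V → ℝ) (u v : V) : ℝ :=
  sInf {x | ∃ p : G.Walk u v, x = walkWeight w p}

def IsDistanceMatrix {n : ℕ} (D : Fin n → Fin n → ℝ) : Prop :=
  (∀ i j, D i j = D j i) ∧ (∀ i, D i i = 0) ∧ (∀ i j, 0 ≤ D i j) ∧
    (∀ i j k, D i j ≤ D i k + D k j)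

def Ematrix {n : ℕ} (i : Fin n) : Fin n → Fin n → ℝ :=
  fun j k => if (j = i ∧ k ≠ i) ∨ (j ≠ i ∧ k = i) then 1 else 0

noncomputable def compaction {n : ℕ} (D : Fin n → Fin n → ℝ) (i : Fin n) : ℝ :=
  (1/2) * sInf {x | ∃ p r : Fin n, p ≠ i ∧ r ≠ i ∧ x = D p i + D i r - D p r}

/-!
Subtracting `∑ a_k E_k` only changes off-diagonal entries, by `a_i + a_j`, so the block hypothesis
gives the two formulas for `D` at once. For the tree, the candidate distances to a fixed leaf `j`
form a potential that drops by at most the weight of each edge (this is where `a ≥ 0`, which is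
the triangle inequality, and `δ ≥ 0` enter), so no walk is shorter than the obvious path through
the hubs, whose weight is exactly `D i j`.
-/

open SimpleGraph

section WalkWeight

variable {V : Type*} {G : SimpleGraph V} (w : V → V → ℝ)

@[simp]
lemma walkWeight_nil {u : V} : walkWeight w (Walk.nil : G.Walk u u) = 0 := by
  simp [walkWeight]

@[simp]
lemma walkWeight_cons {u v x : V} (h : G.Adj u v) (p : G.Walk v x) :
    walkWeight w (Walk.cons h p) = w u v + walkWeight w p := by
  simp [walkWeight]

lemma le_walkWeight_add_of_potential (f : V → ℝ) (hf : ∀ x y, G.Adj x y → f x ≤ w x y + f y)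
    {u v : V} (p : G.Walk u v) : f u ≤ walkWeight w p + f v := by
  induction p with
  | nil => simp
  | cons h q ih => rw [walkWeight_cons]; linarith [hf _ _ h]

lemma gdist_eq_of_potential (f : V → ℝ) (hf : ∀ x y, G.Adj x y → f x ≤ w x y + f y)
    {u v : V} (p : G.Walk u v) (hp : walkWeight w p = f u - f v) :
    gdist G w u v = f u - f v := by
  refine IsLeast.csInf_eq ⟨⟨p, hp.symm⟩, ?_⟩
  rintro _ ⟨q, rfl⟩
  linarith [le_walkWeight_add_of_potential w f hf q]

end WalkWeight

section Compaction

variable {n : ℕ}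

lemma compaction_nonneg {D : Fin n → Fin n → ℝ} (hD : IsDistanceMatrix D) (i : Fin n) :
    0 ≤ compaction D i := by
  refine mul_nonneg (by norm_num) (Real.sInf_nonneg ?_)
  rintro _ ⟨p, r, -, -, rfl⟩
  linarith [hD.2.2.2 p r i]

lemma Ematrix_apply_of_ne {i j : Fin n} (hij : i ≠ j) (k : Fin n) :
    Ematrix k i j = (if i = k then 1 else 0) + (if j = k then 1 else 0) := by
  unfold Ematrix
  by_cases hi : i = k <;> by_cases hj : j = k <;> simp_all [eq_comm]

lemma sum_mul_Ematrix_of_ne (c : Fin n → ℝ) {i j : Fin n} (hij : i ≠ j) :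
    ∑ k, c k * Ematrix k i j = c i + c j := by
  simp [Ematrix_apply_of_ne hij, mul_add, Finset.sum_add_distrib]

end Compaction

section DoubleStar

variable {ι : Type*} (s : ι → Bool) (a : ι → ℝ) (δ : ℝ)

def doubleStar : SimpleGraph (ι ⊕ Bool) :=
  fromRel fun u v => (∃ p, u = .inl p ∧ v = .inr (s p)) ∨ (u = .inr false ∧ v = .inr true)

def IsDoubleStarWeight (w : ι ⊕ Bool → ι ⊕ Bool → ℝ) : Prop :=
  (∀ p b, w (.inl p) (.inr b) = a p) ∧ (∀ p b, w (.inr b) (.inl p) = a p) ∧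
    ∀ b c, w (.inr b) (.inr c) = δ

variable {s}

lemma doubleStar_adj_inl_inr {p : ι} {b : Bool} (h : s p = b) :
    (doubleStar s).Adj (.inl p) (.inr b) := by
  subst h
  exact (fromRel_adj _ _ _).2 ⟨by simp, .inl (.inl ⟨p, rfl, rfl⟩)⟩

lemma doubleStar_adj_inr_inr {b c : Bool} (h : b ≠ c) :
    (doubleStar s).Adj (.inr b) (.inr c) := by
  refine (fromRel_adj _ _ _).2 ⟨by simpa using h, ?_⟩
  cases b <;> cases c <;> simp_all

variable [DecidableEq ι]

variable (s) in
def doubleStarDist (i j : ι) : ℝ :=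
  if i = j then 0 else a i + a j + if s i = s j then 0 else δ

variable (s) in
def doubleStarPotential (j : ι) : ι ⊕ Bool → ℝ
  | .inl p => doubleStarDist s a δ p j
  | .inr b => a j + if b = s j then 0 else δ

variable {a δ} {w : ι ⊕ Bool → ι ⊕ Bool → ℝ}

lemma exists_walk_doubleStar (hw : IsDoubleStarWeight a δ w) (i j : ι) :
    ∃ q : (doubleStar s).Walk (.inl i) (.inl j), walkWeight w q = doubleStarDist s a δ i j := by
  obtain ⟨hw_leaf, hw_leaf', hw_hub⟩ := hw
  by_cases hij : i = j
  · subst hij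
    exact ⟨.nil, by simp [doubleStarDist]⟩
  by_cases hs : s i = s j
  · refine ⟨.cons (doubleStar_adj_inl_inr hs) (.cons (doubleStar_adj_inl_inr rfl).symm .nil), ?_⟩
    simp [hw_leaf, hw_leaf', doubleStarDist, hij, hs]
  · refine ⟨.cons (doubleStar_adj_inl_inr rfl) (.cons (doubleStar_adj_inr_inr hs)
      (.cons (doubleStar_adj_inl_inr rfl).symm .nil)), ?_⟩
    simp [hw_leaf, hw_leaf', hw_hub, doubleStarDist, hij, hs]
    ring

lemma doubleStarDist_le_add (ha : ∀ p, 0 ≤ a p) (i j : ι) :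
    doubleStarDist s a δ i j ≤ a i + a j + if s i = s j then 0 else δ := by
  by_cases hij : i = j
  · subst hij
    simpa [doubleStarDist] using add_nonneg (ha i) (ha i)
  · simp [doubleStarDist, hij]

lemma add_le_add_doubleStarDist (ha : ∀ p, 0 ≤ a p) (i j : ι) :
    a j + (if s i = s j then 0 else δ) ≤ a i + doubleStarDist s a δ i j := by
  by_cases hij : i = j
  · simp [doubleStarDist, hij]
  · simp only [doubleStarDist, hij, if_false]
    linarith [ha i]

lemma doubleStarPotential_le (hw : IsDoubleStarWeight a δ w) (ha : ∀ p, 0 ≤ a p) (hδ : 0 ≤ δ)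
    (j : ι) {x y : ι ⊕ Bool} (hxy : (doubleStar s).Adj x y) :
    doubleStarPotential s a δ j x ≤ w x y + doubleStarPotential s a δ j y := by
  obtain ⟨hw_leaf, hw_leaf', hw_hub⟩ := hw
  obtain ⟨-, (⟨p, rfl, rfl⟩ | ⟨rfl, rfl⟩) | (⟨p, rfl, rfl⟩ | ⟨rfl, rfl⟩)⟩ :=
    (fromRel_adj _ _ _).1 hxy
  · simpa only [doubleStarPotential, hw_leaf, add_assoc] using doubleStarDist_le_add ha p j
  · simp only [doubleStarPotential, hw_hub]
    cases s j <;> simp <;> linarith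
  · simpa only [doubleStarPotential, hw_leaf'] using add_le_add_doubleStarDist ha p j
  · simp only [doubleStarPotential, hw_hub]
    cases s j <;> simp <;> linarith

theorem gdist_doubleStar (hw : IsDoubleStarWeight a δ w) (ha : ∀ p, 0 ≤ a p) (hδ : 0 ≤ δ)
    (i j : ι) : gdist (doubleStar s) w (.inl i) (.inl j) = doubleStarDist s a δ i j := by
  obtain ⟨q, hq⟩ := exists_walk_doubleStar hw i j
  simpa [doubleStarPotential, doubleStarDist] using
    gdist_eq_of_potential _ _ (fun _ _ => doubleStarPotential_le hw ha hδ j) q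
      (by simp [hq, doubleStarPotential, doubleStarDist])

end DoubleStar

lemma fromRel_lt_eq_doubleStar (n n1 : ℕ) :
    fromRel (fun u v : Fin n ⊕ Bool =>
        (∃ p : Fin n, u = Sum.inl p ∧
          v = (if p.val < n1 then Sum.inr false else Sum.inr true)) ∨
        (u = Sum.inr false ∧ v = Sum.inr true)) =
      doubleStar fun p : Fin n => !decide (p.val < n1) := by
  have hub (p : Fin n) : (if p.val < n1 then Sum.inr false else Sum.inr true : Fin n ⊕ Bool) =
      .inr !decide (p.val < n1) := by
    split_ifs with h <;> simp [h]
  simp only [hub, doubleStar]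

theorem stmt3 {n n1 : ℕ}
    (D : Fin n → Fin n → ℝ) (hD : IsDistanceMatrix D) (δ : ℝ) (hδ : 0 < δ)
    (hblock : ∀ i j : Fin n,
      D i j - ∑ k, compaction D k * Ematrix k i j =
        if ((i.val < n1) ↔ (j.val < n1)) then 0 else δ) :
    ((∀ i j : Fin n, i ≠ j → ((i.val < n1) ↔ (j.val < n1)) →
        D i j = compaction D i + compaction D j) ∧
     (∀ i j : Fin n, ¬((i.val < n1) ↔ (j.val < n1)) →
        D i j = δ + compaction D i + compaction D j)) ∧
    (∀ i j : Fin n,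
      gdist (SimpleGraph.fromRel (fun u v : Fin n ⊕ Bool =>
          (∃ p : Fin n, u = Sum.inl p ∧
            v = (if p.val < n1 then Sum.inr false else Sum.inr true)) ∨
          (u = Sum.inr false ∧ v = Sum.inr true)))
        (fun u v => match u, v with
          | Sum.inl p, _ => compaction D p
          | _, Sum.inl q => compaction D q
          | _, _ => δ)
        (Sum.inl i) (Sum.inl j) = D i j) := by
  have hD_ne (i j : Fin n) (hij : i ≠ j) : D i j = compaction D i + compaction D j +
      if ((i.val < n1) ↔ (j.val < n1)) then 0 else δ := by
    linarith [hblock i j, sum_mul_Ematrix_of_ne (compaction D) hij]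
  refine ⟨⟨fun i j hij hb => by simpa [hb] using hD_ne i j hij, fun i j hb => ?_⟩, fun i j => ?_⟩
  · rw [hD_ne i j (by rintro rfl; exact hb Iff.rfl), if_neg hb]
    ring
  · rw [fromRel_lt_eq_doubleStar]
    refine (gdist_doubleStar ⟨fun _ _ => rfl, fun _ _ => rfl, fun _ _ => rfl⟩
      (compaction_nonneg hD) hδ.le i j).trans ?_
    by_cases hij : i = j
    · simp [doubleStarDist, hij, hD.2.1]
    · simp [doubleStarDist, hij, hD_ne i j hij]
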